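/- Let a < b be real numbers with h = b - a, let b : ℝ → ℝ be twice continuously differentiable on [a, b] with M = sup_{t ∈ [a,b]} |b''(t)|, let p be a natural number, let q be a real polynomial of degree at most p, let u : ℝ → ℝ be continuous on [a, b], and let P be the L²(a,b)-orthogonal projection of u onto polynomials of degree at most p, i.e. a polynomial of degree at most p with ∫_{a}^{b} (u - P) r dx = 0 for every polynomial r of degree at most p. Then | ∫_{a}^{b} b(x) q'(x) (u(x) - P(x)) dx | ≤ (M h / 4) √(p(p+1)) · ‖q‖_{L²(a,b)} · ‖u - P‖_{L²(a,b)}. -/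

import Mathlib

/-!
Subtracting the secant `ℓ` of `f` changes nothing, since `ℓ q'` has degree at most `p` and
`u - P` is orthogonal to such polynomials. With the bubble `w = (x - a)(b - x)`, concavity gives
`|f - ℓ| ≤ (M / 2) w ≤ (M h / 4) √w`, so Cauchy–Schwarz reduces the claim to the inverse
inequality `∫ w q'² ≤ p (p + 1) ∫ q²`. That holds because `∫ w q'² = ∫ -(w q')' q` and the
Legendre polynomials of `[a, b]` are orthogonal eigenfunctions of `q ↦ -(w q')'` with
eigenvalues `n (n + 1)`.
-/

open Polynomial Set MeasureTheory

namespace Polynomial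

theorem natDegree_mul_derivative_le {R : Type*} [Semiring R] {r q : R[X]} (hr : r.natDegree ≤ 1) :
    (r * derivative q).natDegree ≤ q.natDegree := by
  by_cases hq : derivative q = 0
  · simp [hq]
  have hlt := natDegree_derivative_lt fun h => hq (derivative_of_natDegree_zero h)
  exact natDegree_mul_le.trans (by omega)

noncomputable def bubble (a b : ℝ) : ℝ[X] := (X - C a) * (C b - X)

/-- Rodrigues' formula: up to normalisation, the `n`-th Legendre polynomial moved to `[a, b]`. -/
noncomputable def legendre (a b : ℝ) (n : ℕ) : ℝ[X] := derivative^[n] (bubble a b ^ n)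

variable {a b : ℝ}

theorem eval_bubble (x : ℝ) : (bubble a b).eval x = (x - a) * (b - x) := by
  simp [bubble]

theorem derivative_derivative_bubble : derivative (derivative (bubble a b)) = -2 := by
  simp only [bubble, derivative_mul, derivative_sub, derivative_add, derivative_X, derivative_C,
    sub_zero, one_mul, zero_sub, mul_neg, mul_one, neg_sub]
  ring

theorem natDegree_bubble : (bubble a b).natDegree = 2 := by
  unfold bubble
  compute_degree!

theorem leadingCoeff_bubble : (bubble a b).leadingCoeff = -1 := by
  rw [bubble, leadingCoeff_mul, leadingCoeff_X_sub_C, ← neg_sub, leadingCoeff_neg,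
    leadingCoeff_X_sub_C, one_mul]

theorem coeff_legendre_self (n : ℕ) :
    (legendre a b n).coeff n = (n + n).descFactorial n * (-1) ^ n := by
  have hlead : (bubble a b ^ n).coeff (n + n) = (-1) ^ n := by
    rw [show n + n = (bubble a b ^ n).natDegree by rw [natDegree_pow, natDegree_bubble]; ring,
      coeff_natDegree, leadingCoeff_pow, leadingCoeff_bubble]
  rw [legendre, coeff_iterate_derivative, hlead, nsmul_eq_mul]

theorem degree_legendre (n : ℕ) : (legendre a b n).degree = n := by
  refine degree_eq_of_le_of_coeff_ne_zero (degree_le_of_natDegree_le ?_) ?_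
  · refine (natDegree_iterate_derivative _ _).trans ?_
    rw [natDegree_pow, natDegree_bubble]; omega
  · rw [coeff_legendre_self]
    have : (n + n).descFactorial n ≠ 0 := by
      rw [Ne, Nat.descFactorial_eq_zero_iff_lt]; omega
    simp [this]

theorem natDegree_legendre (n : ℕ) : (legendre a b n).natDegree = n :=
  natDegree_eq_of_degree_eq_some (degree_legendre n)

theorem iterate_derivative_derivative_bubble_mul (m : ℕ) (s : ℝ[X]) :
    derivative^[m + 1] (derivative (bubble a b) * s) =
      derivative (bubble a b) * derivative^[m + 1] s - 2 * (m + 1) * derivative^[m] s := by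
  induction m with
  | zero =>
    simp only [zero_add, Function.iterate_one, Function.iterate_zero_apply, derivative_mul,
      derivative_derivative_bubble, Nat.cast_zero]
    ring
  | succ m ih =>
    rw [Function.iterate_succ_apply', ih, Function.iterate_succ_apply' _ (m + 1),
      Function.iterate_succ_apply']
    simp only [derivative_sub, derivative_mul, derivative_derivative_bubble, Nat.cast_succ,
      derivative_ofNat, derivative_add, derivative_natCast, derivative_one]
    ring

theorem iterate_derivative_bubble_mul (m : ℕ) (s : ℝ[X]) :
    derivative^[m + 2] (bubble a b * s) = bubble a b * derivative^[m + 2] s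
      + (m + 2) * (derivative (bubble a b) * derivative^[m + 1] s)
      - (m + 2) * (m + 1) * derivative^[m] s := by
  induction m with
  | zero =>
    simp only [Function.iterate_succ_apply', Function.iterate_zero_apply, derivative_mul,
      derivative_add, derivative_derivative_bubble, Nat.cast_zero]
    ring
  | succ m ih =>
    rw [Function.iterate_succ_apply', ih, Function.iterate_succ_apply' _ (m + 2),
      Function.iterate_succ_apply' _ (m + 1), Function.iterate_succ_apply' _ m]
    simp only [derivative_sub, derivative_add, derivative_mul, derivative_derivative_bubble,
      Nat.cast_succ, derivative_ofNat, derivative_natCast, derivative_one]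
    ring

theorem derivative_bubble_mul_derivative_legendre (n : ℕ) :
    derivative (bubble a b * derivative (legendre a b n)) =
      (-(n * (n + 1) : ℝ)) • legendre a b n := by
  cases n with
  | zero => simp [legendre]
  | succ m =>
    have hpow : bubble a b * derivative (bubble a b ^ (m + 1)) =
        C ((m + 1 : ℕ) : ℝ) * (derivative (bubble a b) * bubble a b ^ (m + 1)) := by
      rw [derivative_pow]; simp only [add_tsub_cancel_right]; ring
    set W := bubble a b ^ (m + 1)
    set R := legendre a b (m + 1)
    have hR : derivative^[m] (derivative W) = R := (Function.iterate_succ_apply _ _ _).symm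
    have hR' : derivative^[m + 1] (derivative W) = derivative R := by
      rw [Function.iterate_succ_apply', hR]
    have hR'' : derivative^[m + 2] (derivative W) = derivative (derivative R) := by
      rw [Function.iterate_succ_apply', hR']
    have hWR' : derivative^[m + 2] W = derivative R := Function.iterate_succ_apply' _ _ _
    -- differentiate `w (wⁿ)' = n w' wⁿ` a further `n + 1` times, by Leibniz's rule
    have h := congrArg (derivative^[m + 2]) hpow
    rw [iterate_derivative_bubble_mul, iterate_derivative_C_mul,
      iterate_derivative_derivative_bubble_mul, hR, hR', hR'', hWR',
      show derivative^[m + 1] W = R from rfl] at h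
    rw [derivative_mul, smul_eq_C_mul]
    push_cast at h ⊢
    simp only [map_add, map_neg, map_mul, map_one, map_natCast] at h ⊢
    linear_combination h

theorem exists_eq_sum_legendre {p : ℕ} {q : ℝ[X]} (hq : q.natDegree ≤ p) :
    ∃ c : ℕ → ℝ, ∑ n ∈ Finset.range (p + 1), c n • legendre a b n = q := by
  let S : Sequence ℝ := ⟨legendre a b, degree_legendre⟩
  have hspan := S.span_degreeLT (m := p + 1) fun n _ =>
    isUnit_iff_ne_zero.mpr (leadingCoeff_ne_zero.mpr (S.ne_zero n))
  have hmem : q ∈ Submodule.span ℝ (S '' ↑(Finset.range (p + 1))) := by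
    rw [Finset.coe_range, hspan, mem_degreeLT]
    exact (degree_le_of_natDegree_le hq).trans_lt (WithBot.coe_lt_coe.mpr p.lt_succ_self)
  exact (Submodule.mem_span_image_finset_iff_exists_fun' ℝ).mp hmem

theorem eval_iterate_derivative_pow_eq_zero {R : Type*} [CommRing R] {w : R[X]} {c : R}
    (hw : w.IsRoot c) {i n : ℕ} (hi : i < n) : (derivative^[i] (w ^ n)).eval c = 0 := by
  obtain ⟨r, hr⟩ :=
    pow_sub_dvd_iterate_derivative_of_pow_dvd i (pow_dvd_pow_of_dvd (dvd_iff_isRoot.mpr hw) n)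
  rw [hr, eval_mul, eval_pow, eval_sub, eval_X, eval_C, sub_self, zero_pow (by omega), zero_mul]

theorem integral_eval_derivative_mul (r s : ℝ[X]) :
    ∫ x in a..b, (derivative r * s).eval x =
      r.eval b * s.eval b - r.eval a * s.eval a - ∫ x in a..b, (r * derivative s).eval x := by
  simp only [eval_mul]
  rw [intervalIntegral.integral_mul_deriv_eq_deriv_mul (fun x _ => r.hasDerivAt x)
    (fun x _ => s.hasDerivAt x) (r.derivative.continuous.intervalIntegrable a b)
    (s.derivative.continuous.intervalIntegrable a b), sub_sub_cancel]

theorem integral_eval_iterate_derivative_mul {n : ℕ} {W : ℝ[X]}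
    (ha : ∀ k < n, (derivative^[k] W).eval a = 0) (hb : ∀ k < n, (derivative^[k] W).eval b = 0)
    (g : ℝ[X]) :
    ∫ x in a..b, (derivative^[n] W * g).eval x =
      (-1) ^ n * ∫ x in a..b, (W * derivative^[n] g).eval x := by
  induction n generalizing W with
  | zero => simp
  | succ n ih =>
    have hWa : W.eval a = 0 := ha 0 n.succ_pos
    have hWb : W.eval b = 0 := hb 0 n.succ_pos
    rw [Function.iterate_succ_apply, ih (fun k hk => ha (k + 1) (by omega))
      (fun k hk => hb (k + 1) (by omega)), integral_eval_derivative_mul,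
      hWa, hWb, ← Function.iterate_succ_apply' derivative]
    ring

theorem integral_eval_legendre_mul_eq_zero {n : ℕ} {g : ℝ[X]} (hg : g.natDegree < n) :
    ∫ x in a..b, (legendre a b n * g).eval x = 0 := by
  have hroot : ∀ c, (bubble a b).IsRoot c → ∀ k < n, (derivative^[k] (bubble a b ^ n)).eval c = 0 :=
    fun c hc k hk => eval_iterate_derivative_pow_eq_zero hc hk
  rw [legendre, integral_eval_iterate_derivative_mul (hroot a (by simp [bubble]))
    (hroot b (by simp [bubble])),
    iterate_derivative_eq_zero hg]
  simp

theorem integral_eval_legendre_mul_legendre_of_ne {m n : ℕ} (hmn : m ≠ n) :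
    ∫ x in a..b, (legendre a b m * legendre a b n).eval x = 0 := by
  rcases hmn.lt_or_gt with h | h
  · rw [mul_comm]
    exact integral_eval_legendre_mul_eq_zero (by rwa [natDegree_legendre])
  · exact integral_eval_legendre_mul_eq_zero (by rwa [natDegree_legendre])

theorem integral_eval_sum_legendre_mul_sum (s : Finset ℕ) (c d : ℕ → ℝ) :
    ∫ x in a..b, ((∑ n ∈ s, c n • legendre a b n) * ∑ n ∈ s, d n • legendre a b n).eval x =
      ∑ n ∈ s, c n * d n * ∫ x in a..b, (legendre a b n * legendre a b n).eval x := by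
  simp only [Finset.sum_mul_sum, eval_finsetSum]
  rw [intervalIntegral.integral_finsetSum fun _ _ =>
    Continuous.intervalIntegrable (by fun_prop) _ _]
  refine Finset.sum_congr rfl fun n hn => ?_
  rw [intervalIntegral.integral_finsetSum fun _ _ =>
    Continuous.intervalIntegrable (by fun_prop) _ _,
    Finset.sum_eq_single n (fun m _ hmn => ?_) (absurd hn)]
  · simp only [smul_mul_smul_comm, eval_smul, smul_eq_mul, intervalIntegral.integral_const_mul]
  · simp only [smul_mul_smul_comm, eval_smul, smul_eq_mul, intervalIntegral.integral_const_mul,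
      integral_eval_legendre_mul_legendre_of_ne hmn.symm, mul_zero]

theorem integral_bubble_mul_derivative_sq_le (hab : a ≤ b) {p : ℕ} {q : ℝ[X]}
    (hq : q.natDegree ≤ p) :
    ∫ x in a..b, (x - a) * (b - x) * q.derivative.eval x ^ 2 ≤
      p * (p + 1) * ∫ x in a..b, q.eval x ^ 2 := by
  have hibp : ∫ x in a..b, (x - a) * (b - x) * q.derivative.eval x ^ 2 =
      -∫ x in a..b, (derivative (bubble a b * derivative q) * q).eval x := by
    rw [integral_eval_derivative_mul]
    simp [eval_bubble, pow_two, mul_assoc]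
  have hsq : ∫ x in a..b, q.eval x ^ 2 = ∫ x in a..b, (q * q).eval x := by
    simp only [eval_mul, pow_two]
  obtain ⟨c, rfl⟩ := exists_eq_sum_legendre (a := a) (b := b) hq
  have hode : derivative (bubble a b *
      derivative (∑ n ∈ Finset.range (p + 1), c n • legendre a b n)) =
      ∑ n ∈ Finset.range (p + 1), (c n * -(n * (n + 1))) • legendre a b n := by
    simp only [derivative_sum, derivative_smul, Finset.mul_sum, mul_smul_comm,
      derivative_bubble_mul_derivative_legendre, smul_smul]
  rw [hibp, hsq, hode, integral_eval_sum_legendre_mul_sum, integral_eval_sum_legendre_mul_sum,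
    Finset.mul_sum, ← Finset.sum_neg_distrib]
  refine Finset.sum_le_sum fun n hn => ?_
  have hnp : (n : ℝ) ≤ p := by exact_mod_cast Finset.mem_range_succ_iff.mp hn
  have hnorm : 0 ≤ ∫ x in a..b, (legendre a b n * legendre a b n).eval x :=
    intervalIntegral.integral_nonneg hab fun x _ => by rw [eval_mul]; exact mul_self_nonneg _
  have : (n : ℝ) * (n + 1) ≤ p * (p + 1) := by gcongr
  nlinarith [mul_nonneg (sub_nonneg.2 this) (mul_nonneg (mul_self_nonneg (c n)) hnorm)]

end Polynomial

theorem integral_mul_le_sqrt_mul_sqrt {α : Type*} [MeasurableSpace α] {μ : Measure α}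
    {F G : α → ℝ} (hF : Integrable (fun x => F x ^ 2) μ) (hG : Integrable (fun x => G x ^ 2) μ)
    (hFG : Integrable (fun x => F x * G x) μ) :
    ∫ x, F x * G x ∂μ ≤ √(∫ x, F x ^ 2 ∂μ) * √(∫ x, G x ^ 2 ∂μ) := by
  have hquad : ∀ t : ℝ, 0 ≤ (∫ x, F x ^ 2 ∂μ) * (t * t) + 2 * (∫ x, F x * G x ∂μ) * t
      + ∫ x, G x ^ 2 ∂μ := fun t => by
    have hexp : ∫ x, (t * F x + G x) ^ 2 ∂μ = (∫ x, F x ^ 2 ∂μ) * (t * t)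
        + 2 * (∫ x, F x * G x ∂μ) * t + ∫ x, G x ^ 2 ∂μ := by
      calc ∫ x, (t * F x + G x) ^ 2 ∂μ
          = ∫ x, t * t * F x ^ 2 + 2 * t * (F x * G x) + G x ^ 2 ∂μ := by congr 1; ext x; ring
        _ = _ := by
          rw [integral_add ((hF.const_mul _).fun_add (hFG.const_mul _)) hG,
            integral_add (hF.const_mul _) (hFG.const_mul _), integral_const_mul,
            integral_const_mul]
          ring
    exact hexp ▸ integral_nonneg fun x => sq_nonneg _
  have hdisc := discrim_le_zero hquad
  rw [discrim, sub_nonpos] at hdisc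
  calc ∫ x, F x * G x ∂μ ≤ |∫ x, F x * G x ∂μ| := le_abs_self _
    _ ≤ √((∫ x, F x ^ 2 ∂μ) * ∫ x, G x ^ 2 ∂μ) := Real.abs_le_sqrt (by nlinarith)
    _ = _ := Real.sqrt_mul (integral_nonneg fun x => sq_nonneg _) _

theorem abs_integral_mul_mul_le_of_abs_le_sqrt {a b K : ℝ} (hab : a ≤ b) (hK : 0 ≤ K)
    {F G H W : ℝ → ℝ} (hF : ContinuousOn F (Icc a b)) (hG : ContinuousOn G (Icc a b))
    (hH : ContinuousOn H (Icc a b)) (hW : ContinuousOn W (Icc a b))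
    (hW0 : ∀ x ∈ Icc a b, 0 ≤ W x) (hFW : ∀ x ∈ Icc a b, |F x| ≤ K * √(W x)) :
    |∫ x in a..b, F x * G x * H x| ≤
      K * √(∫ x in a..b, W x * G x ^ 2) * √(∫ x in a..b, H x ^ 2) := by
  have hint : ∀ {φ : ℝ → ℝ}, ContinuousOn φ (Icc a b) → IntegrableOn φ (Ioc a b) := fun h =>
    (h.integrableOn_Icc).mono_set Ioc_subset_Icc_self
  have hsqW : ∀ x ∈ Icc a b, (√(W x) * |G x|) ^ 2 = W x * G x ^ 2 := fun x hx => by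
    rw [mul_pow, Real.sq_sqrt (hW0 x hx), sq_abs]
  have hcs : ∫ x in a..b, √(W x) * |G x| * |H x| ≤
      √(∫ x in a..b, W x * G x ^ 2) * √(∫ x in a..b, H x ^ 2) := by
    simp only [intervalIntegral.integral_of_le hab]
    rw [← setIntegral_congr_fun measurableSet_Ioc fun x hx => hsqW x (Ioc_subset_Icc_self hx)]
    simp only [← sq_abs (H _)]
    exact integral_mul_le_sqrt_mul_sqrt (hint (by fun_prop)) (hint (by fun_prop))
      (hint (by fun_prop))
  calc |∫ x in a..b, F x * G x * H x|
      ≤ ∫ x in a..b, |F x * G x * H x| := intervalIntegral.abs_integral_le_integral_abs hab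
    _ ≤ ∫ x in a..b, K * (√(W x) * |G x| * |H x|) := by
        refine intervalIntegral.integral_mono_on hab ?_ ?_ fun x hx => ?_
        · exact ContinuousOn.intervalIntegrable_of_Icc hab (by fun_prop)
        · exact ContinuousOn.intervalIntegrable_of_Icc hab (by fun_prop)
        · rw [abs_mul, abs_mul, ← mul_assoc, ← mul_assoc]
          gcongr
          exact hFW x hx
    _ = K * ∫ x in a..b, √(W x) * |G x| * |H x| := intervalIntegral.integral_const_mul _ _
    _ ≤ K * (√(∫ x in a..b, W x * G x ^ 2) * √(∫ x in a..b, H x ^ 2)) := by gcongr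
    _ = _ := (mul_assoc _ _ _).symm

noncomputable def secant (f : ℝ → ℝ) (a b : ℝ) : ℝ[X] := C (f a) + C (slope f a b) * (X - C a)

section secant

variable {f : ℝ → ℝ} {a b : ℝ}

theorem eval_secant (x : ℝ) : (secant f a b).eval x = f a + slope f a b * (x - a) := by
  simp [secant]

theorem eval_secant_left : (secant f a b).eval a = f a := by
  simp [eval_secant]

theorem eval_secant_right : (secant f a b).eval b = f b := by
  rw [eval_secant, mul_comm, ← smul_eq_mul, sub_smul_slope, vsub_eq_sub, add_sub_cancel]

theorem natDegree_secant_le : (secant f a b).natDegree ≤ 1 := by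
  unfold secant; compute_degree

theorem eval_secant_neg (x : ℝ) : (secant (-f) a b).eval x = -(secant f a b).eval x := by
  simp only [eval_secant, Pi.neg_apply]
  rw [show -f = fun t => -f t from rfl, slope_neg]
  ring

theorem secant_sub_le_of_deriv2_le {f' f'' : ℝ → ℝ} {K : ℝ} (hf : ContinuousOn f (Icc a b))
    (hf' : ∀ x ∈ Ioo a b, HasDerivAt f (f' x) x) (hf'' : ∀ x ∈ Ioo a b, HasDerivAt f' (f'' x) x)
    (hK : ∀ x ∈ Ioo a b, f'' x ≤ K) {x : ℝ} (hx : x ∈ Icc a b) :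
    (secant f a b).eval x - f x ≤ K / 2 * ((x - a) * (b - x)) := by
  have hab : a ≤ b := hx.1.trans hx.2
  -- `f + (K / 2) w - ℓ` is concave and vanishes at `a` and `b`
  set P := C (K / 2) * bubble a b - secant f a b
  have hP'' : ∀ y, (derivative (derivative P)).eval y = -K := fun y => by
    simp [P, secant, derivative_derivative_bubble]
  have hconc : ConcaveOn ℝ (Icc a b) fun y => f y + P.eval y := by
    refine concaveOn_of_hasDerivWithinAt2_nonpos (convex_Icc a b) (hf.add P.continuousOn)
      (f' := fun y => f' y + P.derivative.eval y)
      (f'' := fun y => f'' y + P.derivative.derivative.eval y) ?_ ?_ ?_ <;>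
      rw [interior_Icc] <;> intro y hy
    · exact ((hf' y hy).add (P.hasDerivAt y)).hasDerivWithinAt
    · exact ((hf'' y hy).add (P.derivative.hasDerivAt y)).hasDerivWithinAt
    · linarith [hP'' y, hK y hy]
  have h := hconc.ge_on_segment (left_mem_Icc.2 hab) (right_mem_Icc.2 hab)
    (by rwa [segment_eq_Icc hab])
  simp only [P, eval_sub, eval_mul, eval_C, eval_bubble, eval_secant_left, eval_secant_right,
    sub_self, zero_mul, mul_zero, zero_sub, add_neg_cancel, min_self] at h
  linarith

theorem abs_sub_secant_le_of_abs_deriv2_le {f' f'' : ℝ → ℝ} {K : ℝ}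
    (hf : ContinuousOn f (Icc a b))
    (hf' : ∀ x ∈ Ioo a b, HasDerivAt f (f' x) x) (hf'' : ∀ x ∈ Ioo a b, HasDerivAt f' (f'' x) x)
    (hK : ∀ x ∈ Ioo a b, |f'' x| ≤ K) {x : ℝ} (hx : x ∈ Icc a b) :
    |f x - (secant f a b).eval x| ≤ K / 2 * ((x - a) * (b - x)) := by
  have hle := secant_sub_le_of_deriv2_le hf hf' hf'' (fun y hy => (abs_le.1 (hK y hy)).2) hx
  have hge := secant_sub_le_of_deriv2_le (f := -f) hf.neg (fun y hy => (hf' y hy).neg)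
    (fun y hy => (hf'' y hy).neg) (fun y hy => neg_le.1 (abs_le.1 (hK y hy)).1) hx
  rw [eval_secant_neg, Pi.neg_apply] at hge
  exact abs_le.2 ⟨by linarith, by linarith⟩

theorem abs_sub_secant_le_of_contDiffOn (hf : ContDiffOn ℝ 2 f (Icc a b)) {x : ℝ}
    (hx : x ∈ Icc a b) :
    |f x - (secant f a b).eval x| ≤
      (⨆ t : Icc a b, |iteratedDerivWithin 2 f (Icc a b) t|) / 2 * ((x - a) * (b - x)) := by
  have hf2 : ContDiffOn ℝ (1 + 1) f (Ioo a b) := hf.mono Ioo_subset_Icc_self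
  obtain ⟨hdiff, -, hdiff'⟩ := (contDiffOn_succ_iff_deriv_of_isOpen isOpen_Ioo).1 hf2
  refine abs_sub_secant_le_of_abs_deriv2_le hf.continuousOn
    (fun y hy => (hdiff.differentiableAt (isOpen_Ioo.mem_nhds hy)).hasDerivAt)
    (fun y hy => ((hdiff'.differentiableOn one_ne_zero).differentiableAt
      (isOpen_Ioo.mem_nhds hy)).hasDerivAt) (fun y hy => ?_) hx
  have hab : a < b := hy.1.trans hy.2
  have hcont : ContinuousOn (fun t => |iteratedDerivWithin 2 f (Icc a b) t|) (Icc a b) :=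
    (hf.continuousOn_iteratedDerivWithin le_rfl (uniqueDiffOn_Icc hab)).abs
  have hbdd := isCompact_Icc.bddAbove_image hcont
  rw [image_eq_range] at hbdd
  have hderiv : deriv (deriv f) y = iteratedDerivWithin 2 f (Icc a b) y := by
    rw [iteratedDerivWithin_eq_iteratedDeriv (uniqueDiffOn_Icc hab)
      (hf.contDiffAt (Icc_mem_nhds hy.1 hy.2)) (Ioo_subset_Icc_self hy),
      iteratedDeriv_eq_iterate]
    rfl
  rw [hderiv]
  exact le_ciSup hbdd ⟨y, Ioo_subset_Icc_self hy⟩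

end secant

theorem sub_mul_sub_le_mul_sqrt {a b x : ℝ} (hx : x ∈ Icc a b) :
    (x - a) * (b - x) ≤ (b - a) / 2 * √((x - a) * (b - x)) := by
  have hw : 0 ≤ (x - a) * (b - x) := mul_nonneg (sub_nonneg.2 hx.1) (sub_nonneg.2 hx.2)
  have hsqrt : √((x - a) * (b - x)) ≤ (b - a) / 2 :=
    Real.sqrt_le_iff.2 ⟨by linarith [hx.1, hx.2], by nlinarith [sq_nonneg (x - (a + b) / 2)]⟩
  calc (x - a) * (b - x) = √((x - a) * (b - x)) * √((x - a) * (b - x)) :=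
        (Real.mul_self_sqrt hw).symm
    _ ≤ (b - a) / 2 * √((x - a) * (b - x)) := by gcongr

theorem improved_T2_bound_one_dimensional_general
    (a b : ℝ) (hab : a < b) (f : ℝ → ℝ)
    (hf : ContDiffOn ℝ 2 f (Set.Icc a b))
    (M : ℝ)
    (hM : M = ⨆ t : Set.Icc a b, |iteratedDerivWithin 2 f (Set.Icc a b) t|)
    (p : ℕ) (q : Polynomial ℝ) (hq : q.natDegree ≤ p)
    (u : ℝ → ℝ) (hu : ContinuousOn u (Set.Icc a b))
    (P : Polynomial ℝ)
    (horth : ∀ r : Polynomial ℝ, r.natDegree ≤ p →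
      ∫ x in a..b, (u x - P.eval x) * r.eval x = 0) :
    |∫ x in a..b, f x * q.derivative.eval x * (u x - P.eval x)| ≤
      M * (b - a) / 4 * Real.sqrt ((p : ℝ) * (p + 1)) *
        Real.sqrt (∫ x in a..b, (q.eval x) ^ 2) *
        Real.sqrt (∫ x in a..b, (u x - P.eval x) ^ 2) := by
  have hM0 : 0 ≤ M := hM ▸ Real.iSup_nonneg fun _ => abs_nonneg _
  have hfc := hf.continuousOn
  have hsplit : ∫ x in a..b, f x * q.derivative.eval x * (u x - P.eval x) =
      ∫ x in a..b, (f x - (secant f a b).eval x) * q.derivative.eval x * (u x - P.eval x) := by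
    rw [← sub_zero (∫ x in a..b, _),
      ← horth _ ((natDegree_mul_derivative_le natDegree_secant_le).trans hq),
      ← intervalIntegral.integral_sub (ContinuousOn.intervalIntegrable_of_Icc hab.le (by fun_prop))
        (ContinuousOn.intervalIntegrable_of_Icc hab.le (by fun_prop))]
    congr 1; ext x; rw [eval_mul]; ring
  have hbound : ∀ x ∈ Icc a b, |f x - (secant f a b).eval x| ≤
      M * (b - a) / 4 * √((x - a) * (b - x)) := fun x hx =>
    calc |f x - (secant f a b).eval x| ≤ M / 2 * ((x - a) * (b - x)) :=
          hM ▸ abs_sub_secant_le_of_contDiffOn hf hx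
      _ ≤ M / 2 * ((b - a) / 2 * √((x - a) * (b - x))) :=
          mul_le_mul_of_nonneg_left (sub_mul_sub_le_mul_sqrt hx) (by linarith)
      _ = M * (b - a) / 4 * √((x - a) * (b - x)) := by ring
  rw [hsplit]
  calc _ ≤ M * (b - a) / 4 * √(∫ x in a..b, (x - a) * (b - x) * q.derivative.eval x ^ 2) *
        √(∫ x in a..b, (u x - P.eval x) ^ 2) :=
        abs_integral_mul_mul_le_of_abs_le_sqrt hab.le
          (div_nonneg (mul_nonneg hM0 (sub_nonneg.2 hab.le)) zero_le_four) (by fun_prop)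
          (by fun_prop) (by fun_prop) (by fun_prop)
          (fun x hx => mul_nonneg (sub_nonneg.2 hx.1) (sub_nonneg.2 hx.2)) hbound
    _ ≤ M * (b - a) / 4 * (√(p * (p + 1)) * √(∫ x in a..b, q.eval x ^ 2)) *
        √(∫ x in a..b, (u x - P.eval x) ^ 2) := by
        gcongr
        rw [← Real.sqrt_mul (by positivity)]
        exact Real.sqrt_le_sqrt (integral_bubble_mul_derivative_sq_le hab.le hq)
    _ = _ := by ring

/-- Improved one-dimensional bound on the convection term `T₂` for a `W^{2,∞}`
coefficient: if `P` is the L²(a,b)-orthogonal projection of `u` onto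
polynomials of degree at most `p`, `f` is twice continuously differentiable on
`[a, b]` with `M = sup |f''|`, and `q` has degree at most `p`, then
`|∫_a^b f q' (u - P)| ≤ (M (b-a)/4) √(p(p+1)) ‖q‖_{L²(a,b)} ‖u - P‖_{L²(a,b)}`. -/
theorem improved_T2_bound_one_dimensional
    (a b : ℝ) (hab : a < b) (f : ℝ → ℝ)
    (hf : ContDiffOn ℝ 2 f (Set.Icc a b))
    (M : ℝ)
    (hM : M = ⨆ t : Set.Icc a b, |iteratedDerivWithin 2 f (Set.Icc a b) t|)
    (p : ℕ) (q : Polynomial ℝ) (hq : q.natDegree ≤ p)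
    (u : ℝ → ℝ) (hu : ContinuousOn u (Set.Icc a b))
    (P : Polynomial ℝ) (hP : P.natDegree ≤ p)
    (horth : ∀ r : Polynomial ℝ, r.natDegree ≤ p →
      ∫ x in a..b, (u x - P.eval x) * r.eval x = 0) :
    |∫ x in a..b, f x * q.derivative.eval x * (u x - P.eval x)| ≤
      M * (b - a) / 4 * Real.sqrt ((p : ℝ) * (p + 1)) *
        Real.sqrt (∫ x in a..b, (q.eval x) ^ 2) *
        Real.sqrt (∫ x in a..b, (u x - P.eval x) ^ 2) :=
  improved_T2_bound_one_dimensional_general a b hab f hf M hM p q hq u hu P horth
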